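/- arXiv:1804.09318 — 3 statements merged into one kernel-verified Lean document; each statement's English description precedes it below -/
import Mathlib

section
/- Let Ω ⊂ ℝ² be measurable with finite positive measure and let x ∈ ℝ². Then ∫_{ℝ² \ Ω} (2/(π|Ω|))·exp(−2‖x−y‖²/|Ω|) dy ≥ e^{−2/π} > 1/2. -/
/-!
Among sets of a given finite measure, the integral of a function is largest on a superlevel set
of that measure (bathtub principle). For the Gaussian centred at `x` the superlevel sets are the
discs about `x`, so the integral over `Ωᶜ` is at least the integral over the complement of the
disc of area `|Ω|`. In polar coordinates that tail is
`∫_r^∞ 2πρ e^{-bρ²} dρ = (π/b) e^{-br²}`, which for `b = 2/|Ω|`, `πr² = |Ω|` and the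
normalisation `2/(π|Ω|)` is exactly `e^{-2/π}`.
Finally `2/π < 2/3 < log 2`.
-/

open Real MeasureTheory Set Metric Module

theorem setIntegral_le_setIntegral_of_measure_eq {α : Type*} [MeasurableSpace α] {μ : Measure α}
    {f : α → ℝ} {s t : Set α} {c : ℝ} (hf : Integrable f μ) (hs : MeasurableSet s)
    (ht : MeasurableSet t) (hst : μ s = μ t) (ht_fin : μ t ≠ ⊤)
    (hf_in : ∀ y ∈ t, c ≤ f y) (hf_out : ∀ y ∉ t, f y ≤ c) :
    ∫ y in s, f y ∂μ ≤ ∫ y in t, f y ∂μ := by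
  have hdiff : μ (s \ t) = μ (t \ s) :=
    measure_sdiff_symm hs.nullMeasurableSet ht.nullMeasurableSet hst
      (measure_ne_top_of_subset inter_subset_right ht_fin)
  have hts_fin : μ (t \ s) ≠ ⊤ := measure_ne_top_of_subset sdiff_subset ht_fin
  have h_st : ∫ y in s \ t, f y ∂μ ≤ c * μ.real (t \ s) := by
    have := setIntegral_mono_on hf.integrableOn (integrableOn_const (hdiff ▸ hts_fin))
      (hs.diff ht) fun y hy => hf_out y hy.2
    rwa [setIntegral_const, smul_eq_mul, mul_comm, measureReal_def, hdiff,
      ← measureReal_def] at this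
  have h_ts : c * μ.real (t \ s) ≤ ∫ y in t \ s, f y ∂μ :=
    setIntegral_ge_of_const_le_real (ht.diff hs) hts_fin (fun y hy => hf_in y hy.1)
      hf.integrableOn
  rw [← integral_inter_add_sdiff (s := s) ht hf.integrableOn,
    ← integral_inter_add_sdiff (s := t) hs hf.integrableOn, inter_comm t s]
  linarith

theorem integral_Ioi_mul_exp_neg_mul_sq {b : ℝ} (hb : 0 < b) (r : ℝ) :
    ∫ ρ in Ioi r, ρ * exp (-b * ρ ^ 2) = exp (-b * r ^ 2) / (2 * b) := by
  have hderiv : ∀ ρ ∈ Ici r,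
      HasDerivAt (fun ρ => -exp (-b * ρ ^ 2) / (2 * b)) (ρ * exp (-b * ρ ^ 2)) ρ := by
    intro ρ _
    refine (((hasDerivAt_pow 2 ρ).const_mul (-b)).exp.fun_neg.div_const (2 * b)).congr_deriv ?_
    field_simp
    ring
  have hlim : Filter.Tendsto (fun ρ => -exp (-b * ρ ^ 2) / (2 * b)) Filter.atTop (nhds 0) := by
    have h_exponent : Filter.Tendsto (fun ρ : ℝ => -b * ρ ^ 2) Filter.atTop Filter.atBot :=
      (Filter.tendsto_pow_atTop two_ne_zero).const_mul_atTop_of_neg (neg_neg_of_pos hb)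
    simpa using (tendsto_exp_atBot.comp h_exponent).neg.div_const (2 * b)
  rw [integral_Ioi_of_hasDerivAt_of_tendsto' hderiv (integrable_mul_exp_neg_mul_sq hb).integrableOn
    hlim]
  ring

section Plane

variable {E : Type*} [NormedAddCommGroup E] [InnerProductSpace ℝ E] [FiniteDimensional ℝ E]
  [MeasurableSpace E] [BorelSpace E]

theorem integrable_exp_neg_mul_sq_norm_sub (hE : finrank ℝ E = 2) {b : ℝ} (hb : 0 < b) (x : E) :
    Integrable fun y => exp (-b * ‖x - y‖ ^ 2) := by
  have : Nontrivial E := Module.nontrivial_of_finrank_pos (R := ℝ) (by omega)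
  have h : Integrable fun y : E => exp (-b * ‖y‖ ^ 2) := by
    rw [integrable_fun_norm_addHaar volume (f := fun ρ => exp (-b * ρ ^ 2)), hE]
    simpa using (integrable_mul_exp_neg_mul_sq hb).integrableOn
  exact h.comp_sub_left x

theorem integral_compl_closedBall_exp_neg_mul_sq_norm_sub (hE : finrank ℝ E = 2) {b : ℝ}
    (hb : 0 < b) {r : ℝ} (hr : 0 ≤ r) (x : E) :
    ∫ y in (closedBall x r)ᶜ, exp (-b * ‖x - y‖ ^ 2) = π / b * exp (-b * r ^ 2) := by
  have : Nontrivial E := Module.nontrivial_of_finrank_pos (R := ℝ) (by omega)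
  set g : ℝ → ℝ := (Ioi r).indicator fun ρ => exp (-b * ρ ^ 2)
  have hunit : volume.real (ball (0 : E) 1) = π := by
    simp [measureReal_def, InnerProductSpace.volume_ball_of_dim_even (k := 1) (by omega), pi_nonneg]
  calc ∫ y in (closedBall x r)ᶜ, exp (-b * ‖x - y‖ ^ 2)
      = ∫ y, g ‖x - y‖ := by
        rw [← integral_indicator measurableSet_closedBall.compl]
        congr 1 with y
        simp [g, indicator, mem_closedBall, dist_eq_norm, norm_sub_rev]
    _ = ∫ y, g ‖y‖ := integral_sub_left_eq_self (fun y => g ‖y‖) volume x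
    _ = 2 * π * ∫ ρ in Ioi r, ρ * exp (-b * ρ ^ 2) := by
        rw [integral_fun_norm_addHaar, hE, hunit, ← max_eq_right hr, ← Ioi_inter_Ioi,
          ← setIntegral_indicator measurableSet_Ioi]
        simp [g, indicator_mul_right, mul_assoc]
    _ = π / b * exp (-b * r ^ 2) := by
        rw [integral_Ioi_mul_exp_neg_mul_sq hb]
        field_simp

theorem volume_closedBall_sqrt_measureReal_div_pi (hE : finrank ℝ E = 2) (x : E) {s : Set E}
    (hs : volume s ≠ ⊤) : volume (closedBall x √(volume.real s / π)) = volume s := by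
  have : Nontrivial E := Module.nontrivial_of_finrank_pos (R := ℝ) (by omega)
  rw [InnerProductSpace.volume_closedBall_of_dim_even (k := 1) (by omega), hE,
    ← ENNReal.ofReal_pow (sqrt_nonneg _), sq_sqrt (by positivity),
    ← ENNReal.ofReal_mul (by positivity)]
  simp [div_mul_cancel₀ _ pi_ne_zero, measureReal_def, ENNReal.ofReal_toReal hs]

theorem le_integral_compl_exp_neg_mul_sq_norm_sub (hE : finrank ℝ E = 2) {b : ℝ} (hb : 0 < b)
    {s : Set E} (hs : MeasurableSet s) (hs_fin : volume s ≠ ⊤) (x : E) :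
    π / b * exp (-b * (volume.real s / π)) ≤ ∫ y in sᶜ, exp (-b * ‖x - y‖ ^ 2) := by
  set r := √(volume.real s / π)
  have hball : volume (closedBall x r) = volume s :=
    volume_closedBall_sqrt_measureReal_div_pi hE x hs_fin
  have hf := integrable_exp_neg_mul_sq_norm_sub hE hb x
  have h_bathtub :
      ∫ y in s, exp (-b * ‖x - y‖ ^ 2) ≤ ∫ y in closedBall x r, exp (-b * ‖x - y‖ ^ 2) := by
    refine setIntegral_le_setIntegral_of_measure_eq hf hs measurableSet_closedBall
      hball.symm (hball ▸ hs_fin) (c := exp (-b * r ^ 2)) (fun y hy => ?_)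
      (fun y hy => ?_)
    · rw [mem_closedBall', dist_eq_norm] at hy
      simp only [neg_mul, exp_le_exp, neg_le_neg_iff]
      gcongr
    · rw [mem_closedBall', dist_eq_norm, not_le] at hy
      simp only [neg_mul, exp_le_exp, neg_le_neg_iff]
      gcongr
  rw [← sq_sqrt (by positivity : 0 ≤ volume.real s / π),
    ← integral_compl_closedBall_exp_neg_mul_sq_norm_sub hE hb (sqrt_nonneg _) x]
  have h_split_s := integral_add_compl hs hf
  have h_split_ball := integral_add_compl (measurableSet_closedBall (x := x) (ε := r)) hf
  linarith

end Plane

theorem one_half_lt_exp_neg_two_div_pi : 1 / 2 < exp (-(2 / π)) := by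
  have h : 2 / π < log 2 := by
    have := log_two_gt_d9
    have : 2 / π < 2 / 3 := div_lt_div_of_pos_left two_pos three_pos pi_gt_three
    linarith
  rw [← exp_log (one_half_pos (α := ℝ)), one_div, log_inv]
  exact exp_lt_exp.mpr (neg_lt_neg h)

theorem stmt7 (Ω : Set (EuclideanSpace ℝ (Fin 2))) (hm : MeasurableSet Ω)
    (h0 : 0 < volume Ω) (hfin : volume Ω < ⊤) (x : EuclideanSpace ℝ (Fin 2)) :
    (∫ y in Ωᶜ,
        (2 / (π * (volume Ω).toReal)) *
          Real.exp (-(2 * ‖x - y‖ ^ 2 / (volume Ω).toReal))) ≥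
      Real.exp (-(2 / π)) ∧
    Real.exp (-(2 / π)) > 1 / 2 := by
  refine ⟨?_, one_half_lt_exp_neg_two_div_pi⟩
  set A := (volume Ω).toReal
  have hA : 0 < A := ENNReal.toReal_pos h0.ne' hfin.ne
  have key := le_integral_compl_exp_neg_mul_sq_norm_sub finrank_euclideanSpace_fin
    (b := 2 / A) (by positivity) hm hfin.ne x
  have hexp : ∀ y, -(2 * ‖x - y‖ ^ 2 / A) = -(2 / A) * ‖x - y‖ ^ 2 := fun y => by ring
  simp_rw [hexp, integral_const_mul]
  calc exp (-(2 / π))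
      = 2 / (π * A) * (π / (2 / A) * exp (-(2 / A) * (volume.real Ω / π))) := by
        rw [show volume.real Ω = A from rfl]
        field_simp
    _ ≤ _ := by gcongr
end

section
/- With u_ε as above and Ω the unit disk, ∫_Ω max{1, log(|Ω|/‖y‖²)}·|Δu_ε(y)| dy = (2/ε²)·∫_{B(0,ε)} log(π/‖y‖²) dy (for ε small enough that log(π/‖y‖²) ≥ 1 on B(0,ε)), and this quantity is comparable to log(1/ε): there exist constants 0 < a ≤ b such that a·log(1/ε) ≤ (2/ε²)∫_{B(0,ε)} log(π/‖y‖²) dy ≤ b·(1 + log(1/ε)) for all ε ∈ (0, 1/2). -/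
open Real MeasureTheory Set Metric

/-- The Laplacian as the sum of pure second partial derivatives. -/
noncomputable def lap {n : ℕ} (u : EuclideanSpace ℝ (Fin n) → ℝ)
    (x : EuclideanSpace ℝ (Fin n)) : ℝ :=
  ∑ i : Fin n, fderiv ℝ (fun y => fderiv ℝ u y (EuclideanSpace.single i 1)) x
    (EuclideanSpace.single i 1)

/-- The radial function `u_ε` from the sharpness example on the unit disk. -/
noncomputable def uEps (ε : ℝ) (x : EuclideanSpace ℝ (Fin 2)) : ℝ :=
  if ‖x‖ ≤ ε then 1 / 2 - Real.log ε - ‖x‖ ^ 2 / (2 * ε ^ 2) else -Real.log ‖x‖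

/-! On the unit disk `u_ε` is radial, `u_ε y = g (‖y‖ ^ 2)` with `g` affine for `‖y‖ < ε` and
`g s = -log s / 2` for `‖y‖ > ε`. The identity `Δ (g ∘ ‖·‖²) x = 4 ‖x‖² g'' + 2 n g'` gives
`Δu_ε = -2/ε²` inside the small disk and `0` outside (`log ‖·‖` is harmonic in the plane), so up
to the null circle `‖y‖ = ε` the weighted integral only sees `B(0, ε)`, where the weight is
`log (π / ‖y‖²)`. In polar coordinates
`∫_{B(0,ε)} log (π / ‖y‖²) = π ε² (log π + 1) - 2 π ε² log ε`, so the quantity equals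
`2 π (log π + 1) + 4 π log (1 / ε)`. -/

open Filter Topology

section Laplacian

variable {n : ℕ}

theorem Filter.EventuallyEq.lap_eq {u v : EuclideanSpace ℝ (Fin n) → ℝ}
    {x : EuclideanSpace ℝ (Fin n)} (h : u =ᶠ[𝓝 x] v) : lap u x = lap v x := by
  refine Finset.sum_congr rfl fun i _ => ?_
  have hdir : (fun y => fderiv ℝ u y (EuclideanSpace.single i 1)) =ᶠ[𝓝 x]
      fun y => fderiv ℝ v y (EuclideanSpace.single i 1) :=
    (h.fderiv (𝕜 := ℝ)).mono fun y hy => by simp only [hy]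
  rw [hdir.fderiv_eq]

theorem lap_eq_sum_of_hasFDerivAt {u : EuclideanSpace ℝ (Fin n) → ℝ}
    {u' : EuclideanSpace ℝ (Fin n) → EuclideanSpace ℝ (Fin n) →L[ℝ] ℝ}
    {u'' : EuclideanSpace ℝ (Fin n) →L[ℝ] EuclideanSpace ℝ (Fin n) →L[ℝ] ℝ}
    {x : EuclideanSpace ℝ (Fin n)}
    (hu : ∀ᶠ y in 𝓝 x, HasFDerivAt u (u' y) y) (hu' : HasFDerivAt u' u'' x) :
    lap u x = ∑ i, u'' (EuclideanSpace.single i 1) (EuclideanSpace.single i 1) := by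
  refine Finset.sum_congr rfl fun i _ => ?_
  have hdir : (fun y => fderiv ℝ u y (EuclideanSpace.single i 1)) =ᶠ[𝓝 x]
      fun y => u' y (EuclideanSpace.single i 1) :=
    hu.mono fun y hy => by simp only [hy.fderiv]
  rw [hdir.fderiv_eq, (hu'.clm_apply (hasFDerivAt_const _ x)).fderiv]
  simp

theorem lap_comp_norm_sq {g g' : ℝ → ℝ} {g'' : ℝ} {x : EuclideanSpace ℝ (Fin n)}
    (hg : ∀ᶠ s in 𝓝 (‖x‖ ^ 2), HasDerivAt g (g' s) s) (hg' : HasDerivAt g' g'' (‖x‖ ^ 2)) :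
    lap (fun y => g (‖y‖ ^ 2)) x = 4 * ‖x‖ ^ 2 * g'' + 2 * n * g' (‖x‖ ^ 2) := by
  have hN : ∀ y : EuclideanSpace ℝ (Fin n),
      HasFDerivAt (fun y => ‖y‖ ^ 2) (2 • innerSL ℝ y) y :=
    fun y => (hasStrictFDerivAt_norm_sq y).hasFDerivAt
  have hcont : Continuous fun y : EuclideanSpace ℝ (Fin n) => ‖y‖ ^ 2 := by fun_prop
  have hu : ∀ᶠ y in 𝓝 x, HasFDerivAt (fun y => g (‖y‖ ^ 2))
      (g' (‖y‖ ^ 2) • (2 • innerSL ℝ y)) y :=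
    (hcont.tendsto x).eventually hg |>.mono fun y hy => hy.comp_hasFDerivAt y (hN y)
  have hu' := (hg'.comp_hasFDerivAt x (hN x)).smul (2 • innerSL ℝ).hasFDerivAt
  have hinner : ∀ v w : EuclideanSpace ℝ (Fin n), innerSL ℝ v w = inner ℝ v w := fun _ _ => rfl
  have hsq : ∑ i, g'' * (2 * x i) * (2 * x i) = 4 * ‖x‖ ^ 2 * g'' := by
    simp only [EuclideanSpace.norm_sq_eq, Real.norm_eq_abs, sq_abs, Finset.mul_sum, Finset.sum_mul]
    exact Finset.sum_congr rfl fun i _ => by ring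
  rw [lap_eq_sum_of_hasFDerivAt hu hu']
  simp only [Function.comp_apply, smul_apply, add_apply, ContinuousLinearMap.smulRight_apply,
    hinner, EuclideanSpace.inner_single_right, ringHom_apply, one_mul, nsmul_eq_mul,
    Nat.cast_ofNat, smul_eq_mul, inner_self_eq_norm_sq_to_K, PiLp.norm_single, norm_one, one_pow,
    mul_one, Finset.sum_add_distrib, Finset.sum_const, Finset.card_univ, Fintype.card_fin, hsq]
  ring

end Laplacian

theorem lap_uEps_of_norm_lt {ε : ℝ} {x : EuclideanSpace ℝ (Fin 2)} (hx : ‖x‖ < ε) :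
    lap (uEps ε) x = -(2 / ε ^ 2) := by
  have hε : ε ≠ 0 := ((norm_nonneg x).trans_lt hx).ne'
  have hloc : uEps ε =ᶠ[𝓝 x] fun y => 1 / 2 - log ε - ‖y‖ ^ 2 / (2 * ε ^ 2) :=
    (isOpen_lt continuous_norm continuous_const).eventually_mem hx |>.mono fun y hy =>
      if_pos hy.le
  have hg : ∀ s : ℝ,
      HasDerivAt (fun s => 1 / 2 - log ε - s / (2 * ε ^ 2)) (-(1 / (2 * ε ^ 2))) s := fun s =>
    ((hasDerivAt_id s).div_const _).const_sub _ |>.congr_deriv (by simp)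
  rw [hloc.lap_eq, lap_comp_norm_sq (.of_forall hg) (hasDerivAt_const _ _)]
  field_simp
  ring

theorem lap_uEps_of_lt_norm {ε : ℝ} (hε : 0 ≤ ε) {x : EuclideanSpace ℝ (Fin 2)} (hx : ε < ‖x‖) :
    lap (uEps ε) x = 0 := by
  have hx0 : ‖x‖ ^ 2 ≠ 0 := pow_ne_zero 2 (hε.trans_lt hx).ne'
  have hloc : uEps ε =ᶠ[𝓝 x] fun y => -log (‖y‖ ^ 2) / 2 :=
    (isOpen_lt continuous_const continuous_norm).eventually_mem hx |>.mono
      fun y (hy : ε < ‖y‖) => by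
      simp only [uEps, if_neg (not_le.2 hy), log_pow]
      push_cast
      ring
  have hg : ∀ᶠ s in 𝓝 (‖x‖ ^ 2), HasDerivAt (fun s => -log s / 2) (-s⁻¹ / 2) s :=
    eventually_ne_nhds hx0 |>.mono fun s hs => (hasDerivAt_log hs).neg.div_const 2
  rw [hloc.lap_eq, lap_comp_norm_sq hg ((hasDerivAt_inv hx0).neg.div_const 2)]
  field_simp
  ring

theorem integral_mul_log_div_sq {c : ℝ} (hc : c ≠ 0) {r : ℝ} (hr : 0 ≤ r) :
    ∫ t in 0..r, t * log (c / t ^ 2) = r ^ 2 / 2 * (log c + 1) - r ^ 2 * log r := by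
  have hsplit : (fun t => t * log (c / t ^ 2)) = fun t => t * log c - 2 * (t * log t) := by
    -- at `t = 0` both sides vanish, the left one through the junk value `log (c / 0) = 0`
    ext t
    rcases eq_or_ne t 0 with rfl | ht
    · simp
    · rw [log_div hc (pow_ne_zero 2 ht), log_pow]
      push_cast
      ring
  have hderiv : ∀ t ∈ Ioo 0 r, HasDerivAt (fun t => t ^ 2 / 2 * (log c + 1) - t * (t * log t))
      (t * log c - 2 * (t * log t)) t := by
    intro t ht
    have := (((hasDerivAt_pow 2 t).div_const 2).mul_const (log c + 1)).sub
      ((hasDerivAt_id' t).mul (hasDerivAt_mul_log ht.1.ne'))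
    exact this.congr_deriv (by norm_num; ring)
  rw [hsplit, intervalIntegral.integral_eq_sub_of_hasDerivAt_of_le hr (by fun_prop) hderiv
    ((by fun_prop : Continuous _).intervalIntegrable _ _)]
  ring

theorem integral_ball_fin_two_fun_norm (f : ℝ → ℝ) {r : ℝ} (hr : 0 ≤ r) :
    ∫ y in ball (0 : EuclideanSpace ℝ (Fin 2)) r, f ‖y‖ = 2 * π * ∫ t in 0..r, t * f t := by
  have hind : (ball (0 : EuclideanSpace ℝ (Fin 2)) r).indicator (fun y => f ‖y‖) =
      fun y => (Iio r).indicator f ‖y‖ := by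
    ext y
    by_cases hy : ‖y‖ < r
    · rw [indicator_of_mem (mem_ball_zero_iff.2 hy), indicator_of_mem (mem_Iio.2 hy)]
    · rw [indicator_of_notMem (mt mem_ball_zero_iff.1 hy), indicator_of_notMem (mt mem_Iio.1 hy)]
  have hrad : (fun t : ℝ => t ^ (2 - 1) • (Iio r).indicator f t) =
      (Iio r).indicator fun t => t * f t := by
    ext t
    simp [indicator_apply]
  rw [← integral_indicator measurableSet_ball, hind, integral_fun_norm_addHaar volume,
    finrank_euclideanSpace_fin, measureReal_def, EuclideanSpace.volume_ball_fin_two, hrad,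
    integral_indicator measurableSet_Iio, Measure.restrict_restrict measurableSet_Iio,
    Iio_inter_Ioi, ← integral_Ioc_eq_integral_Ioo, ← intervalIntegral.integral_of_le hr]
  simp only [ENNReal.ofReal_one, one_pow, one_mul, ENNReal.toReal_ofReal pi_nonneg, smul_eq_mul,
    nsmul_eq_mul]
  ring

theorem abs_lap_uEps_ae_eq {ε : ℝ} (hε : 0 ≤ ε) :
    (fun y => |lap (uEps ε) y|) =ᵐ[volume]
      (ball (0 : EuclideanSpace ℝ (Fin 2)) ε).indicator fun _ => 2 / ε ^ 2 := by
  filter_upwards [measure_eq_zero_iff_ae_notMem.1 (Measure.addHaar_sphere volume 0 ε)]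
    with y hy
  rcases lt_or_gt_of_ne (mt mem_sphere_zero_iff_norm.2 hy) with hlt | hgt
  · rw [lap_uEps_of_norm_lt hlt, indicator_of_mem (mem_ball_zero_iff.2 hlt), abs_neg,
      abs_of_nonneg (by positivity)]
  · rw [lap_uEps_of_lt_norm hε hgt, indicator_of_notMem (mt mem_ball_zero_iff.1 hgt.not_gt),
      abs_zero]

theorem integral_mul_abs_lap_uEps (w : EuclideanSpace ℝ (Fin 2) → ℝ) {ε : ℝ} (hε : 0 ≤ ε)
    (hε1 : ε ≤ 1) :
    ∫ y in ball 0 1, w y * |lap (uEps ε) y| = 2 / ε ^ 2 * ∫ y in ball 0 ε, w y := by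
  have hae : ∀ᵐ y, y ∈ ball 0 1 → w y * |lap (uEps ε) y| =
      (ball 0 ε).indicator (fun y => w y * (2 / ε ^ 2)) y :=
    (abs_lap_uEps_ae_eq hε).mono fun y hy _ => by rw [indicator_mul_right]; exact congrArg _ hy
  rw [setIntegral_congr_ae measurableSet_ball hae, integral_indicator measurableSet_ball,
    Measure.restrict_restrict measurableSet_ball,
    inter_eq_self_of_subset_left (ball_subset_ball hε1), integral_mul_const, mul_comm]

theorem integral_ball_log_div_norm_sq {c : ℝ} (hc : c ≠ 0) {r : ℝ} (hr : 0 ≤ r) :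
    ∫ y in ball (0 : EuclideanSpace ℝ (Fin 2)) r, log (c / ‖y‖ ^ 2) =
      π * r ^ 2 * (log c + 1) - 2 * π * r ^ 2 * log r := by
  rw [integral_ball_fin_two_fun_norm (fun t => log (c / t ^ 2)) hr, integral_mul_log_div_sq hc hr]
  ring

theorem stmt10 :
    (∀ ε : ℝ, 0 < ε → ε < 1 →
      (∀ y : EuclideanSpace ℝ (Fin 2), 0 < ‖y‖ → ‖y‖ < ε → 1 ≤ Real.log (π / ‖y‖ ^ 2)) →
      (∫ y in Metric.ball (0 : EuclideanSpace ℝ (Fin 2)) 1,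
          max 1 (Real.log (π / ‖y‖ ^ 2)) * |lap (uEps ε) y|) =
        (2 / ε ^ 2) *
          ∫ y in Metric.ball (0 : EuclideanSpace ℝ (Fin 2)) ε, Real.log (π / ‖y‖ ^ 2)) ∧
    (∃ a b : ℝ, 0 < a ∧ a ≤ b ∧ ∀ ε ∈ Set.Ioo (0 : ℝ) (1 / 2),
      a * Real.log (1 / ε) ≤
          (2 / ε ^ 2) *
            ∫ y in Metric.ball (0 : EuclideanSpace ℝ (Fin 2)) ε, Real.log (π / ‖y‖ ^ 2) ∧
      (2 / ε ^ 2) *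
          (∫ y in Metric.ball (0 : EuclideanSpace ℝ (Fin 2)) ε, Real.log (π / ‖y‖ ^ 2)) ≤
        b * (1 + Real.log (1 / ε))) := by
  refine ⟨fun ε hε hε1 hlog => ?_, ?_⟩
  · rw [integral_mul_abs_lap_uEps _ hε.le hε1.le]
    congr 1
    refine setIntegral_congr_ae measurableSet_ball ?_
    filter_upwards [(countable_singleton 0).ae_notMem volume] with y hy0 hy
    exact max_eq_right (hlog y (norm_pos_iff.2 hy0) (mem_ball_zero_iff.1 hy))
  have hlogπ : 0 ≤ log π := log_nonneg (by linarith [pi_gt_three])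
  refine ⟨4 * π, 2 * π * (log π + 1) + 4 * π, by positivity, by nlinarith [pi_pos], ?_⟩
  rintro ε ⟨hε, hε2⟩
  have hL : 0 ≤ log (1 / ε) := log_nonneg (by rw [le_div_iff₀ hε]; linarith)
  have hclosed : 2 / ε ^ 2 * ∫ y in ball (0 : EuclideanSpace ℝ (Fin 2)) ε, log (π / ‖y‖ ^ 2) =
      2 * π * (log π + 1) + 4 * π * log (1 / ε) := by
    rw [integral_ball_log_div_norm_sq pi_ne_zero hε.le, one_div, log_inv]
    field_simp
    ring
  rw [hclosed]
  constructor <;> nlinarith [pi_pos, mul_nonneg pi_pos.le hL]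
end

section
/- For all r > 0 and t > 0: ∫₀^t (4πs)^{−1} exp(−r²/(4s)) ds ≤ (1/(4π))·max{1, 2 + log(4t/r²)}·max{1, e·exp(−r²/(4t))}; in particular the kernel ∫₀^{|Ω|} p_{ℝ²}(s,x,y) ds is bounded by an absolute constant times max{1, log(|Ω|/‖x−y‖²)} for x ≠ y and any finite-measure Ω ⊂ ℝ². -/
/-!
Split the time integral at `s = r² / 4`. On `(0, c]` with `4c ≤ r²` the kernel is at most
`e⁻¹ / (4πc)`, because `exp (-r² / 4s) ≤ exp (-c / s)` and `x e^{-x} ≤ e⁻¹` for `x = c / s`;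
so that piece contributes at most `1 / (4π)`. Beyond `r² / 4` the kernel is at most
`(4πs)⁻¹`, which integrates to `(4π)⁻¹ log (4t / r²)`.
-/

open Real MeasureTheory Set

noncomputable def planarHeatKernel (r s : ℝ) : ℝ :=
  (4 * π * s)⁻¹ * exp (-(r ^ 2 / (4 * s)))

lemma planarHeatKernel_nonneg (r : ℝ) {s : ℝ} (hs : 0 ≤ s) : 0 ≤ planarHeatKernel r s := by
  unfold planarHeatKernel; positivity

lemma measurable_planarHeatKernel (r : ℝ) : Measurable (planarHeatKernel r) := by
  unfold planarHeatKernel; fun_prop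

lemma planarHeatKernel_le_inv (r : ℝ) {s : ℝ} (hs : 0 < s) :
    planarHeatKernel r s ≤ (4 * π)⁻¹ * s⁻¹ := by
  have hexp : exp (-(r ^ 2 / (4 * s))) ≤ 1 := exp_le_one_iff.2 (neg_nonpos.2 (by positivity))
  calc planarHeatKernel r s ≤ (4 * π * s)⁻¹ * 1 := by unfold planarHeatKernel; gcongr
    _ = (4 * π)⁻¹ * s⁻¹ := by rw [mul_one, mul_inv]

lemma planarHeatKernel_le_of_le {r s c : ℝ} (hs : 0 < s) (hsc : s ≤ c) (hc : 4 * c ≤ r ^ 2) :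
    planarHeatKernel r s ≤ exp (-1) / (4 * π * c) := by
  have hc0 : 0 < c := hs.trans_le hsc
  have hexp : exp (-(r ^ 2 / (4 * s))) ≤ exp (-(c / s)) := by
    refine exp_le_exp.2 (neg_le_neg ?_)
    rw [div_le_div_iff₀ hs (by positivity)]
    nlinarith
  calc planarHeatKernel r s ≤ (4 * π * s)⁻¹ * exp (-(c / s)) := by
        unfold planarHeatKernel; gcongr
    _ = (4 * π * c)⁻¹ * (c / s * exp (-(c / s))) := by field_simp
    _ ≤ (4 * π * c)⁻¹ * exp (-1) := by gcongr; exact mul_exp_neg_le_exp_neg_one _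
    _ = exp (-1) / (4 * π * c) := by ring

lemma planarHeatKernel_le {r s : ℝ} (hr : r ≠ 0) (hs : 0 < s) :
    planarHeatKernel r s ≤ exp (-1) / (π * r ^ 2) := by
  calc planarHeatKernel r s
        = (π * r ^ 2)⁻¹ * (r ^ 2 / (4 * s) * exp (-(r ^ 2 / (4 * s)))) := by
        unfold planarHeatKernel; field_simp
    _ ≤ (π * r ^ 2)⁻¹ * exp (-1) := by gcongr; exact mul_exp_neg_le_exp_neg_one _
    _ = exp (-1) / (π * r ^ 2) := by ring

lemma intervalIntegrable_planarHeatKernel {r a b : ℝ} (hr : r ≠ 0) (ha : 0 ≤ a) (hb : 0 ≤ b) :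
    IntervalIntegrable (planarHeatKernel r) volume a b := by
  refine (intervalIntegrable_const (c := exp (-1) / (π * r ^ 2))).mono_fun'
    (measurable_planarHeatKernel r).aestronglyMeasurable ?_
  filter_upwards [ae_restrict_mem measurableSet_uIoc] with s hs
  have hs0 : 0 < s := (le_min ha hb).trans_lt hs.1
  rw [norm_of_nonneg (planarHeatKernel_nonneg r hs0.le)]
  exact planarHeatKernel_le hr hs0

lemma integral_planarHeatKernel_le_of_four_mul_le {r c : ℝ} (hc : 0 < c) (h : 4 * c ≤ r ^ 2) :
    ∫ s in Ioc 0 c, planarHeatKernel r s ≤ (4 * π)⁻¹ * exp (-1) := by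
  have hbound : ∀ s ∈ Ioc 0 c, ‖planarHeatKernel r s‖ ≤ exp (-1) / (4 * π * c) := by
    intro s hs
    rw [norm_of_nonneg (planarHeatKernel_nonneg r hs.1.le)]
    exact planarHeatKernel_le_of_le hs.1 hs.2 h
  calc ∫ s in Ioc 0 c, planarHeatKernel r s
        ≤ ‖∫ s in Ioc 0 c, planarHeatKernel r s‖ := le_abs_self _
    _ ≤ exp (-1) / (4 * π * c) * volume.real (Ioc 0 c) :=
        norm_setIntegral_le_of_norm_le_const measure_Ioc_lt_top hbound
    _ = (4 * π)⁻¹ * exp (-1) := by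
        rw [Real.volume_real_Ioc_of_le hc.le]; field_simp; ring

lemma integral_planarHeatKernel_le_of_le_four_mul {r t : ℝ} (hr : r ≠ 0) (h : r ^ 2 ≤ 4 * t) :
    ∫ s in Ioc 0 t, planarHeatKernel r s ≤ (4 * π)⁻¹ * (1 + log (4 * t / r ^ 2)) := by
  set a := r ^ 2 / 4 with ha
  have ha0 : 0 < a := by positivity
  have hat : a ≤ t := by rw [ha]; linarith
  have hnear : ∫ s in (0 : ℝ)..a, planarHeatKernel r s ≤ (4 * π)⁻¹ * 1 := by
    rw [intervalIntegral.integral_of_le ha0.le]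
    refine (integral_planarHeatKernel_le_of_four_mul_le ha0 (by rw [ha]; linarith)).trans ?_
    gcongr
    exact exp_le_one_iff.2 (by norm_num)
  have hinv : IntervalIntegrable (fun s : ℝ => (4 * π)⁻¹ * s⁻¹) volume a t := by
    refine (intervalIntegral.intervalIntegrable_inv (fun s hs => ?_) continuousOn_id).const_mul _
    rw [uIcc_of_le hat] at hs
    exact (ha0.trans_le hs.1).ne'
  have hfar : ∫ s in a..t, planarHeatKernel r s ≤ (4 * π)⁻¹ * log (4 * t / r ^ 2) := by
    calc ∫ s in a..t, planarHeatKernel r s ≤ ∫ s in a..t, (4 * π)⁻¹ * s⁻¹ :=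
          intervalIntegral.integral_mono_on hat
            (intervalIntegrable_planarHeatKernel hr ha0.le (ha0.le.trans hat)) hinv
            (fun s hs => planarHeatKernel_le_inv r (ha0.trans_le hs.1))
      _ = (4 * π)⁻¹ * log (4 * t / r ^ 2) := by
          rw [intervalIntegral.integral_const_mul, integral_inv_of_pos ha0 (ha0.trans_le hat), ha]
          congr 2
          field_simp
  rw [← intervalIntegral.integral_of_le (ha0.le.trans hat),
    ← intervalIntegral.integral_add_adjacent_intervals
      (intervalIntegrable_planarHeatKernel hr le_rfl ha0.le)
      (intervalIntegrable_planarHeatKernel hr ha0.le (ha0.le.trans hat))]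
  linarith

lemma integral_planarHeatKernel_le {r t : ℝ} (hr : r ≠ 0) (ht : 0 < t) :
    ∫ s in Ioc 0 t, planarHeatKernel r s ≤ (4 * π)⁻¹ * max 1 (2 + log (4 * t / r ^ 2)) := by
  rcases le_or_gt (r ^ 2) (4 * t) with h | h
  · refine (integral_planarHeatKernel_le_of_le_four_mul hr h).trans ?_
    gcongr
    exact le_max_of_le_right (by linarith)
  · refine (integral_planarHeatKernel_le_of_four_mul_le ht h.le).trans ?_
    gcongr
    exact le_max_of_le_left (exp_le_one_iff.2 (by norm_num))

lemma max_one_two_add_log_four_mul_le {x : ℝ} (hx : 0 < x) :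
    max 1 (2 + log (4 * x)) ≤ 6 * max 1 (log x) := by
  have hlog4 : log 4 ≤ 3 := by linarith [log_le_sub_one_of_pos (show (0 : ℝ) < 4 by norm_num)]
  rw [log_mul (by norm_num) hx.ne']
  have h1 := le_max_left 1 (log x)
  have h2 := le_max_right 1 (log x)
  exact max_le (by linarith) (by linarith)

theorem stmt18 :
    (∀ r t : ℝ, 0 < r → 0 < t →
      (∫ s in Set.Ioc (0 : ℝ) t, (4 * π * s)⁻¹ * Real.exp (-(r ^ 2 / (4 * s)))) ≤
        (1 / (4 * π)) * max 1 (2 + Real.log (4 * t / r ^ 2)) *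
          max 1 (Real.exp 1 * Real.exp (-(r ^ 2 / (4 * t))))) ∧
    ∃ C : ℝ, 0 < C ∧
      ∀ Ω : Set (EuclideanSpace ℝ (Fin 2)), 0 < volume Ω → volume Ω < ⊤ →
        ∀ x y : EuclideanSpace ℝ (Fin 2), x ≠ y →
          (∫ s in Set.Ioc (0 : ℝ) (volume Ω).toReal,
              (4 * π * s)⁻¹ * Real.exp (-(‖x - y‖ ^ 2 / (4 * s)))) ≤
            C * max 1 (Real.log ((volume Ω).toReal / ‖x - y‖ ^ 2)) := by
  refine ⟨fun r t hr ht => ?_, (4 * π)⁻¹ * 6, by positivity, fun Ω hΩ hΩfin x y hxy => ?_⟩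
  · calc ∫ s in Ioc 0 t, planarHeatKernel r s
        ≤ (4 * π)⁻¹ * max 1 (2 + log (4 * t / r ^ 2)) := integral_planarHeatKernel_le hr.ne' ht
      _ ≤ _ := by
          rw [one_div]
          exact le_mul_of_one_le_right (by positivity) (le_max_left _ _)
  · have hT : 0 < (volume Ω).toReal := ENNReal.toReal_pos hΩ.ne' hΩfin.ne
    have hr : ‖x - y‖ ≠ 0 := norm_ne_zero_iff.2 (sub_ne_zero.2 hxy)
    calc ∫ s in Ioc 0 (volume Ω).toReal, planarHeatKernel ‖x - y‖ s
        ≤ (4 * π)⁻¹ * max 1 (2 + log (4 * (volume Ω).toReal / ‖x - y‖ ^ 2)) :=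
          integral_planarHeatKernel_le hr hT
      _ ≤ (4 * π)⁻¹ * (6 * max 1 (log ((volume Ω).toReal / ‖x - y‖ ^ 2))) := by
          rw [mul_div_assoc]
          gcongr
          exact max_one_two_add_log_four_mul_le (by positivity)
      _ = _ := by ring
end
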